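/- For all ρ with 0 < ρ ≤ 2 and all χ with −π/2 < χ < −π/6, one has 432 − ρ⁴ + 16·sinχ·(4cos²χ − 1)·ρ³ − 72ρ² > 0. Consequently the cubic w(s) = (ρsinχ−2)s³ − ρcosχ·s² + (ρsinχ+6)s − ρcosχ, whose algebraic discriminant equals 4[432 − ρ⁴ + 16sinχ(4cos²χ−1)ρ³ − 72ρ²], has positive discriminant and hence three distinct real roots for these parameter values. -/
import Mathlib


open Real

/-- The cubic `w(s) = (ρsinχ−2)s³ − ρcosχ·s² + (ρsinχ+6)s − ρcosχ`, the
leading-order (in `K²`) factor of the Walcher polynomial. -/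
noncomputable def wCubic (ρ χ s : ℝ) : ℝ :=
  (ρ * Real.sin χ - 2) * s^3 - ρ * Real.cos χ * s^2
    + (ρ * Real.sin χ + 6) * s - ρ * Real.cos χ

/-- Algebraic discriminant of the cubic `a s³ + b s² + c s + d`. -/
noncomputable def cubicDisc (a b c d : ℝ) : ℝ :=
  18 * a * b * c * d - 4 * b^3 * d + b^2 * c^2 - 4 * a * c^3 - 27 * a^2 * d^2

set_option maxHeartbeats 1600000 in
theorem stmt12 (ρ χ : ℝ) (hρ : 0 < ρ) (hρ2 : ρ ≤ 2)
    (hχ1 : -(π / 2) < χ) (hχ2 : χ < -(π / 6)) :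
    432 - ρ^4 + 16 * Real.sin χ * (4 * (Real.cos χ)^2 - 1) * ρ^3 - 72 * ρ^2 > 0 ∧
    cubicDisc (ρ * Real.sin χ - 2) (-(ρ * Real.cos χ)) (ρ * Real.sin χ + 6)
        (-(ρ * Real.cos χ)) =
      4 * (432 - ρ^4 + 16 * Real.sin χ * (4 * (Real.cos χ)^2 - 1) * ρ^3 - 72 * ρ^2) ∧
    ∃ r₁ r₂ r₃ : ℝ, r₁ ≠ r₂ ∧ r₁ ≠ r₃ ∧ r₂ ≠ r₃ ∧
      wCubic ρ χ r₁ = 0 ∧ wCubic ρ χ r₂ = 0 ∧ wCubic ρ χ r₃ = 0 := by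
  have hπ : (0:ℝ) < π := Real.pi_pos
  have hpyth : Real.sin χ ^ 2 + Real.cos χ ^ 2 = 1 := Real.sin_sq_add_cos_sq χ
  -- basic bounds on sin χ
  have hS1 : -1 < Real.sin χ := by
    have h := Real.sin_lt_sin_of_lt_of_le_pi_div_two (x := -(π/2)) (y := χ)
      le_rfl (by linarith) hχ1
    rwa [Real.sin_neg, Real.sin_pi_div_two] at h
  have hS2 : Real.sin χ < -(1/2) := by
    have h := Real.sin_lt_sin_of_lt_of_le_pi_div_two (x := χ) (y := -(π/6))
      hχ1.le (by linarith) hχ2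
    rwa [Real.sin_neg, Real.sin_pi_div_six] at h
  refine ⟨?_, ?_, ?_⟩
  · -- positivity of the discriminant expression
    have key : 432 - ρ^4 + 16 * Real.sin χ * (4 * (Real.cos χ)^2 - 1) * ρ^3 - 72 * ρ^2
        = (2 - ρ) * (ρ + 6)^3
          + 16 * ρ^3 * ((1 - Real.sin χ) * (2 * Real.sin χ + 1)^2) := by
      linear_combination (64 * Real.sin χ * ρ^3) * hpyth
    have t1 : 0 ≤ (2 - ρ) * (ρ + 6)^3 :=
      mul_nonneg (by linarith) (by positivity)
    have hsq : 0 < (2 * Real.sin χ + 1)^2 := by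
      have hneg : 2 * Real.sin χ + 1 < 0 := by linarith
      rw [pow_two]
      exact mul_pos_of_neg_of_neg hneg hneg
    have t2 : 0 < 16 * ρ^3 * ((1 - Real.sin χ) * (2 * Real.sin χ + 1)^2) := by
      have : 0 < (1 - Real.sin χ) * (2 * Real.sin χ + 1)^2 :=
        mul_pos (by linarith) hsq
      positivity
    linarith [key, t1, t2]
  · -- the discriminant identity
    simp only [cubicDisc]
    linear_combination ((-288)*ρ^2 + (-64)*ρ^3*Real.sin χ + (-4)*ρ^4
      + (-4)*ρ^4*(Real.cos χ)^2 + (-4)*ρ^4*(Real.sin χ)^2) * hpyth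
  · -- three distinct real roots
    have ht : Real.sqrt 3 ^ 2 = 3 := Real.sq_sqrt (by norm_num)
    have ht0 : (0:ℝ) < Real.sqrt 3 := Real.sqrt_pos.mpr (by norm_num)
    -- evaluation identities
    have e1 : wCubic ρ χ (-(Real.sqrt 3)) = -8 * ρ * Real.sin (χ + π/6) := by
      simp only [wCubic, Real.sin_add, Real.cos_pi_div_six, Real.sin_pi_div_six]
      linear_combination ((-1)*ρ*Real.cos χ + 2*Real.sqrt 3
        - Real.sqrt 3*ρ*Real.sin χ) * ht
    have e2 : wCubic ρ χ (-(Real.sqrt 3)/3)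
        = -(4*Real.sqrt 3/9) * (4 + 2*ρ*Real.sin (χ + π/3)) := by
      simp only [wCubic, Real.sin_add, Real.cos_pi_div_three, Real.sin_pi_div_three]
      linear_combination ((1/3)*ρ*Real.cos χ + (2/27)*Real.sqrt 3
        + (-1/27)*Real.sqrt 3*ρ*Real.sin χ) * ht
    have e3 : wCubic ρ χ (Real.sqrt 3/3)
        = (4*Real.sqrt 3/9) * (4 + 2*ρ*Real.sin (χ - π/3)) := by
      simp only [wCubic, Real.sin_sub, Real.cos_pi_div_three, Real.sin_pi_div_three]
      linear_combination ((1/3)*ρ*Real.cos χ + (-2/27)*Real.sqrt 3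
        + (1/27)*Real.sqrt 3*ρ*Real.sin χ) * ht
    have e4 : wCubic ρ χ (Real.sqrt 3) = 8 * ρ * Real.sin (χ - π/6) := by
      simp only [wCubic, Real.sin_sub, Real.cos_pi_div_six, Real.sin_pi_div_six]
      linear_combination ((-1)*ρ*Real.cos χ - 2*Real.sqrt 3
        + Real.sqrt 3*ρ*Real.sin χ) * ht
    -- sign facts
    have hA : Real.sin (χ + π/6) < 0 :=
      Real.sin_neg_of_neg_of_neg_pi_lt (by linarith) (by linarith)
    have hB : Real.sin (χ - π/6) < 0 :=
      Real.sin_neg_of_neg_of_neg_pi_lt (by linarith) (by linarith)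
    have hp3 : -(1/2) < Real.sin (χ + π/3) := by
      have h := Real.sin_lt_sin_of_lt_of_le_pi_div_two (x := -(π/6)) (y := χ + π/3)
        (by linarith) (by linarith) (by linarith)
      rwa [Real.sin_neg, Real.sin_pi_div_six] at h
    have hm3 : Real.sin (χ - π/3) = -Real.cos (χ + π/6) := by
      have hx : χ - π/3 = (χ + π/6) - π/2 := by ring
      rw [hx, Real.sin_sub, Real.sin_pi_div_two, Real.cos_pi_div_two]
      ring
    have hk1 : Real.cos (χ + π/6) < 1 := by
      refine lt_of_le_of_ne (Real.cos_le_one _) ?_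
      intro h
      have hz := (Real.cos_eq_one_iff_of_lt_of_lt (x := χ + π/6)
        (by linarith) (by linarith)).mp h
      linarith
    have h1 : 0 < wCubic ρ χ (-(Real.sqrt 3)) := by
      rw [e1]
      have h := mul_pos (show (0:ℝ) < 8*ρ by linarith) (neg_pos.mpr hA)
      nlinarith [h]
    have hq2 : 0 < 4 + 2*ρ*Real.sin (χ + π/3) := by
      have h := mul_pos hρ (show (0:ℝ) < Real.sin (χ + π/3) + 1/2 by linarith)
      nlinarith [h]
    have h2 : wCubic ρ χ (-(Real.sqrt 3)/3) < 0 := by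
      rw [e2]
      have := mul_pos (show (0:ℝ) < 4*Real.sqrt 3/9 by positivity) hq2
      linarith
    have hq3 : 0 < 4 + 2*ρ*Real.sin (χ - π/3) := by
      rw [hm3]
      have h := mul_pos hρ (show (0:ℝ) < 1 - Real.cos (χ + π/6) by linarith)
      nlinarith [h]
    have h3 : 0 < wCubic ρ χ (Real.sqrt 3/3) := by
      rw [e3]
      exact mul_pos (by positivity) hq3
    have h4 : wCubic ρ χ (Real.sqrt 3) < 0 := by
      rw [e4]
      have h := mul_neg_of_pos_of_neg (show (0:ℝ) < 8*ρ by linarith) hB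
      nlinarith [h]
    -- IVT
    have hcont : Continuous fun s : ℝ => wCubic ρ χ s := by
      unfold wCubic; fun_prop
    obtain ⟨r₁, hr₁mem, hr₁⟩ := intermediate_value_Ioo'
      (show -(Real.sqrt 3) ≤ -(Real.sqrt 3)/3 by linarith)
      hcont.continuousOn (Set.mem_Ioo.mpr ⟨h2, h1⟩)
    obtain ⟨r₂, hr₂mem, hr₂⟩ := intermediate_value_Ioo
      (show -(Real.sqrt 3)/3 ≤ Real.sqrt 3/3 by linarith)
      hcont.continuousOn (Set.mem_Ioo.mpr ⟨h2, h3⟩)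
    obtain ⟨r₃, hr₃mem, hr₃⟩ := intermediate_value_Ioo'
      (show Real.sqrt 3/3 ≤ Real.sqrt 3 by linarith)
      hcont.continuousOn (Set.mem_Ioo.mpr ⟨h4, h3⟩)
    exact ⟨r₁, r₂, r₃,
      ne_of_lt (lt_trans hr₁mem.2 hr₂mem.1),
      ne_of_lt (lt_trans hr₁mem.2 (lt_trans hr₂mem.1 (lt_trans hr₂mem.2 hr₃mem.1))),
      ne_of_lt (lt_trans hr₂mem.2 hr₃mem.1),
      hr₁, hr₂, hr₃⟩
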